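/- Let Cay(G,S) be a finite Cayley graph. Then for all i, j ∈ I(G), Σ_{k ∈ I(G)} p_{i,k}^j · |S_k(e)| = |S_j(e)|. Equivalently, the vector π_G = (|S_k(e)|/|G|)_{k ∈ I(G)} is a stationary distribution of every transition matrix P_i = (p_{i,k}^j)_{k,j ∈ I(G)}. -/

import Mathlib

open scoped BigOperators

noncomputable section

/-- The Cayley graph of a group `G` with connection set `S`. -/
def cayley {G : Type*} [Group G] (S : Set G) : SimpleGraph G :=
  SimpleGraph.fromRel (fun v w => v⁻¹ * w ∈ S)

/-- The sphere of radius `n` around `v` in the graph `Γ`. -/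
def gsphere {V : Type*} (Γ : SimpleGraph V) (v : V) (n : ℕ) : Set V :=
  {w | Γ.dist v w = n}

/-- `I(Γ, v₀)`: the set of distances realized from the base point `v₀`. -/
def idx {V : Type*} (Γ : SimpleGraph V) (v0 : V) : Set ℕ :=
  {n | (gsphere Γ v0 n).Nonempty}

/-- The structure constants `p_{i,j}^k` of the (pre-)hypergroup derived from `(Γ, v₀)`. -/
noncomputable def structConst {V : Type*} (Γ : SimpleGraph V) (v0 : V) (i j k : ℕ) : ℚ :=
  (1 / ((gsphere Γ v0 i).ncard : ℚ)) *
    ∑ᶠ v ∈ gsphere Γ v0 i,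
      ((gsphere Γ v j ∩ gsphere Γ v0 k).ncard : ℚ) / ((gsphere Γ v j).ncard : ℚ)

/-! Left multiplication by `v` is an automorphism of `Cay(G,S)` sending `e` to `v`, so every
sphere `S_k(v)` has the size of `S_k(e)`. In `Σ_k p_{i,k}^j |S_k(e)|` the factor `|S_k(e)|` then
cancels the denominator `|S_k(v)|`, and for each `v ∈ S_i(e)` the sets `S_k(v) ∩ S_j(e)` partition
`S_j(e)` as `k` runs over the distances; averaging over `v` leaves `|S_j(e)|`. -/

namespace SimpleGraph

variable {V W : Type*} {G : SimpleGraph V} {G' : SimpleGraph W}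

theorem Hom.edist_le (f : G →g G') (u v : V) : G'.edist (f u) (f v) ≤ G.edist u v := by
  by_cases hr : G.Reachable u v
  · obtain ⟨p, hp⟩ := hr.exists_walk_length_eq_edist
    rw [← hp, ← p.length_map f]
    exact SimpleGraph.edist_le _
  · exact edist_eq_top_of_not_reachable hr ▸ le_top

theorem Iso.edist_eq (φ : G ≃g G') (u v : V) : G'.edist (φ u) (φ v) = G.edist u v :=
  le_antisymm (φ.toHom.edist_le u v) (by simpa using φ.symm.toHom.edist_le (φ u) (φ v))

theorem Iso.dist_eq (φ : G ≃g G') (u v : V) : G'.dist (φ u) (φ v) = G.dist u v :=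
  congrArg ENat.toNat (φ.edist_eq u v)

end SimpleGraph

theorem image_gsphere_iso {V W : Type*} {G : SimpleGraph V} {G' : SimpleGraph W} (φ : G ≃g G')
    (v : V) (n : ℕ) : φ '' gsphere G v n = gsphere G' (φ v) n := by
  ext w
  obtain ⟨u, rfl⟩ := φ.surjective w
  simp [gsphere, φ.injective.mem_set_image, φ.dist_eq]

theorem ncard_gsphere_iso {V W : Type*} {G : SimpleGraph V} {G' : SimpleGraph W} (φ : G ≃g G')
    (v : V) (n : ℕ) : (gsphere G' (φ v) n).ncard = (gsphere G v n).ncard := by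
  rw [← image_gsphere_iso, Set.ncard_image_of_injective _ φ.injective]

def cayleyMulLeft {G : Type*} [Group G] (S : Set G) (g : G) : cayley S ≃g cayley S where
  toEquiv := Equiv.mulLeft g
  map_rel_iff' := by simp [cayley, mul_assoc]

theorem ncard_gsphere_cayley {G : Type*} [Group G] (S : Set G) (v : G) (n : ℕ) :
    (gsphere (cayley S) v n).ncard = (gsphere (cayley S) 1 n).ncard := by
  simpa [cayleyMulLeft] using ncard_gsphere_iso (cayleyMulLeft S v) 1 n

section SphereRegular

variable {V : Type*} [Finite V] (Γ : SimpleGraph V) (v0 : V)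

theorem idx_finite : (idx Γ v0).Finite :=
  (Set.finite_range (Γ.dist v0)).subset fun _ ⟨w, hw⟩ => ⟨w, hw⟩

theorem finsum_mem_ncard_gsphere_inter (v : V) (T : Set V) {K : Set ℕ} (hK : K.Finite)
    (hT : ∀ w ∈ T, Γ.dist v w ∈ K) :
    ∑ᶠ k ∈ K, (gsphere Γ v k ∩ T).ncard = T.ncard := by
  have hdisj : K.PairwiseDisjoint fun k => gsphere Γ v k ∩ T :=
    fun k _ l _ hkl => Set.disjoint_left.2 fun w hk hl => hkl (hk.1.symm.trans hl.1)
  rw [← hK.ncard_biUnion (fun _ _ => Set.toFinite _) hdisj]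
  congr 1
  ext w
  simp only [Set.mem_iUnion, Set.mem_inter_iff, gsphere, Set.mem_ofPred_eq, exists_prop]
  exact ⟨fun ⟨_, _, rfl, hw⟩ => hw, fun hw => ⟨_, hT w hw, rfl, hw⟩⟩

variable {Γ v0}
variable (hreg : ∀ v k, (gsphere Γ v k).ncard = (gsphere Γ v0 k).ncard)
include hreg

theorem dist_mem_idx_of_ncard_gsphere_eq (v w : V) : Γ.dist v w ∈ idx Γ v0 := by
  rw [idx, Set.mem_ofPred_eq, ← Set.ncard_pos (Set.toFinite _), ← hreg v]
  exact (Set.ncard_pos (Set.toFinite _)).2 ⟨w, rfl⟩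

theorem structConst_mul_ncard_gsphere (i j k : ℕ) :
    structConst Γ v0 i k j * (gsphere Γ v0 k).ncard =
      1 / (gsphere Γ v0 i).ncard *
        ∑ᶠ v ∈ gsphere Γ v0 i, ((gsphere Γ v k ∩ gsphere Γ v0 j).ncard : ℚ) := by
  rw [structConst, mul_assoc, finsum_mem_mul]
  congr 1
  refine finsum_mem_congr rfl fun v _ => ?_
  rw [← hreg v]
  -- when `S_k(v) = ∅` the quotient is `x / 0 = 0`, but then so is the numerator
  refine div_mul_cancel_of_imp fun h => ?_
  rw [Nat.cast_eq_zero, Set.ncard_eq_zero (Set.toFinite _)] at h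
  simp [h]

theorem finsum_structConst_mul_ncard_gsphere {i : ℕ} (hi : i ∈ idx Γ v0) (j : ℕ) :
    ∑ᶠ k ∈ idx Γ v0, structConst Γ v0 i k j * (gsphere Γ v0 k).ncard =
      (gsphere Γ v0 j).ncard := by
  have hci : ((gsphere Γ v0 i).ncard : ℚ) ≠ 0 := by
    exact_mod_cast ((Set.ncard_pos (Set.toFinite _)).2 hi).ne'
  have hrow : ∀ v, ∑ᶠ k ∈ idx Γ v0, ((gsphere Γ v k ∩ gsphere Γ v0 j).ncard : ℚ) =
      (gsphere Γ v0 j).ncard := fun v => by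
    rw [← Nat.cast_finsum_mem (idx_finite Γ v0), finsum_mem_ncard_gsphere_inter Γ v _
      (idx_finite Γ v0) fun w _ => dist_mem_idx_of_ncard_gsphere_eq hreg v w]
  calc ∑ᶠ k ∈ idx Γ v0, structConst Γ v0 i k j * (gsphere Γ v0 k).ncard
      = 1 / (gsphere Γ v0 i).ncard * ∑ᶠ v ∈ gsphere Γ v0 i,
          ∑ᶠ k ∈ idx Γ v0, ((gsphere Γ v k ∩ gsphere Γ v0 j).ncard : ℚ) := by
        simp_rw [structConst_mul_ncard_gsphere hreg, ← mul_finsum_mem]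
        rw [finsum_mem_comm _ (idx_finite Γ v0) (Set.toFinite _)]
    _ = 1 / (gsphere Γ v0 i).ncard * ((gsphere Γ v0 i).ncard * (gsphere Γ v0 j).ncard) := by
        rw [finsum_mem_congr rfl fun v _ => hrow v, ← Nat.cast_finsum_mem (Set.toFinite _),
          ← Nat.cast_mul, ← finsum_one, finsum_mem_mul, one_mul]
    _ = (gsphere Γ v0 j).ncard := by field_simp

end SphereRegular

theorem cayley_stationary_distribution_general {G : Type*} [Group G] [Fintype G] (S : Set G) :
    ∀ i ∈ idx (cayley S) (1 : G), ∀ j ∈ idx (cayley S) (1 : G),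
      (∑ᶠ k ∈ idx (cayley S) (1 : G),
          structConst (cayley S) (1 : G) i k j * ((gsphere (cayley S) (1 : G) k).ncard : ℚ))
        = ((gsphere (cayley S) (1 : G) j).ncard : ℚ) ∧
      (∑ᶠ k ∈ idx (cayley S) (1 : G),
          ((gsphere (cayley S) (1 : G) k).ncard : ℚ) / (Fintype.card G : ℚ)
            * structConst (cayley S) (1 : G) i k j)
        = ((gsphere (cayley S) (1 : G) j).ncard : ℚ) / (Fintype.card G : ℚ) := by
  intro i hi j _
  have hsum := finsum_structConst_mul_ncard_gsphere (ncard_gsphere_cayley S) hi j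
  refine ⟨hsum, ?_⟩
  simp_rw [div_mul_eq_mul_div, div_eq_mul_inv, ← finsum_mem_mul,
    mul_comm _ (structConst _ _ _ _ _), hsum]

/-- for a finite Cayley graph, `Σ_{k ∈ I(G)} p_{i,k}^j |S_k(e)| = |S_j(e)|`;
equivalently `π_G = (|S_k(e)|/|G|)_k` is a stationary distribution of every transition
matrix `P_i`. -/
theorem cayley_stationary_distribution {G : Type*} [Group G] [Fintype G] (S : Set G)
    (hsym : ∀ s ∈ S, s⁻¹ ∈ S) (hid : (1 : G) ∉ S)
    (hgen : Subgroup.closure S = ⊤) :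
    ∀ i ∈ idx (cayley S) (1 : G), ∀ j ∈ idx (cayley S) (1 : G),
      (∑ᶠ k ∈ idx (cayley S) (1 : G),
          structConst (cayley S) (1 : G) i k j * ((gsphere (cayley S) (1 : G) k).ncard : ℚ))
        = ((gsphere (cayley S) (1 : G) j).ncard : ℚ) ∧
      (∑ᶠ k ∈ idx (cayley S) (1 : G),
          ((gsphere (cayley S) (1 : G) k).ncard : ℚ) / (Fintype.card G : ℚ)
            * structConst (cayley S) (1 : G) i k j)
        = ((gsphere (cayley S) (1 : G) j).ncard : ℚ) / (Fintype.card G : ℚ) :=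
  cayley_stationary_distribution_general S
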